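/- Let ε > 0, 0 < γ ≤ 2ε, E₀ > 0 and β = 0. Then the functions E₁(t) = E₂(t) = ½E₀ e^{−γt} together with the constant phase ψ(t) ≡ −arcsin(γ/(2ε)) form an exact solution of the two-site energy-phase system with β = 0 on all of ℝ; the same is true with the constant phase ψ(t) ≡ −π + arcsin(γ/(2ε)). -/

import Mathlib

/-- `(E₁, E₂, ψ)` is an exact solution (on all of `ℝ`) of the two-site
energy-phase system with parameters `ε, γ, β`. -/
def IsTwoSiteSolution (ε γ β : ℝ) (E1 E2 ψ : ℝ → ℝ) : Prop :=
  ∀ t : ℝ,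
    HasDerivAt E1 (2 * ε * Real.sqrt (E1 t * E2 t) * Real.sin (ψ t) + 2 * β * E1 t) t ∧
    HasDerivAt E2 (-(2 * ε * Real.sqrt (E1 t * E2 t) * Real.sin (ψ t)) - 2 * γ * E2 t) t ∧
    HasDerivAt ψ (2 * (E2 t - E1 t) *
      (1 + ε * Real.cos (ψ t) / (2 * Real.sqrt (E1 t * E2 t)))) t

open Real

/- With `E₁ = E₂ = E` the phase equation is `ψ̇ = 0`, and both energy equations reduce to
`Ė = 2ε sin ψ · E`, so a constant phase with `2ε sin ψ = -γ` gives exponential decay at rate `γ`. -/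
theorem isTwoSiteSolution_exp_decay_of_sin (ε γ E₀ c : ℝ) (hE₀ : 0 ≤ E₀)
    (hc : 2 * ε * sin c = -γ) :
    IsTwoSiteSolution ε γ 0
      (fun t => (1 / 2) * E₀ * exp (-γ * t))
      (fun t => (1 / 2) * E₀ * exp (-γ * t))
      (fun _ => c) := by
  intro t
  set E := (1 / 2) * E₀ * exp (-γ * t)
  have hsqrt : √(E * E) = E := sqrt_mul_self (by positivity)
  have hE : HasDerivAt (fun t => (1 / 2) * E₀ * exp (-γ * t)) (-γ * E) t :=
    (((hasDerivAt_id' t).const_mul (-γ)).exp.const_mul _).congr_deriv (by ring)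
  refine ⟨?_, ?_, ?_⟩
  · convert hE using 1
    rw [hsqrt, mul_right_comm, hc]
    ring
  · convert hE using 1
    rw [hsqrt, mul_right_comm, hc]
    ring
  · simpa only [sub_self, zero_mul, mul_zero] using hasDerivAt_const t c

/-- The exponentially decaying equal-energy solutions with constant phase
`ψ ≡ −arcsin(γ/(2ε))` or `ψ ≡ −π + arcsin(γ/(2ε))` of the damped (`β = 0`)
two-site system. -/
theorem stmt_14 (ε γ E₀ : ℝ) (hε : 0 < ε) (hγ : 0 < γ) (hγε : γ ≤ 2 * ε)
    (hE₀ : 0 < E₀) :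
    IsTwoSiteSolution ε γ 0
      (fun t => (1 / 2) * E₀ * Real.exp (-γ * t))
      (fun t => (1 / 2) * E₀ * Real.exp (-γ * t))
      (fun _ => -Real.arcsin (γ / (2 * ε))) ∧
    IsTwoSiteSolution ε γ 0
      (fun t => (1 / 2) * E₀ * Real.exp (-γ * t))
      (fun t => (1 / 2) * E₀ * Real.exp (-γ * t))
      (fun _ => -Real.pi + Real.arcsin (γ / (2 * ε))) := by
  have h2ε : 0 < 2 * ε := by linarith
  have hsin : sin (arcsin (γ / (2 * ε))) = γ / (2 * ε) :=
    sin_arcsin (by linarith [div_pos hγ h2ε]) ((div_le_one h2ε).2 hγε)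
  have hscale : 2 * ε * (γ / (2 * ε)) = γ := mul_div_cancel₀ γ h2ε.ne'
  constructor
  · refine isTwoSiteSolution_exp_decay_of_sin ε γ E₀ _ hE₀.le ?_
    rw [sin_neg, hsin, mul_neg, hscale]
  · refine isTwoSiteSolution_exp_decay_of_sin ε γ E₀ _ hE₀.le ?_
    rw [neg_add_eq_sub, sin_sub_pi, hsin, mul_neg, hscale]
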